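/- Let n > 2 be an even integer such that n/2 does not divide 2^{n−1} and n/2 does not divide 2^{n−1} − 1. Then the n-dimensional hypercube Q_n does not admit n/2 completely independent spanning trees. -/

import Mathlib

open SimpleGraph

/-- `T` is a spanning tree of `G`: a subgraph of `G` (on the same vertex set) that is a tree. -/
def IsSpanningTreeOf {V : Type*} (G T : SimpleGraph V) : Prop :=
  T ≤ G ∧ T.IsTree

/-- A family of spanning trees of `G` are *completely independent* if for every pair of
distinct vertices `x ≠ y` and distinct indices `i ≠ j`, the (unique) paths from `x` to `y`
in `T i` and `T j` share no edges, and share no vertices except `x` and `y`. -/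
def AreCISTs {V : Type*} {k : ℕ} (G : SimpleGraph V) (T : Fin k → SimpleGraph V) : Prop :=
  (∀ i, IsSpanningTreeOf G (T i)) ∧
  ∀ x y : V, x ≠ y → ∀ i j : Fin k, i ≠ j →
    ∀ p : (T i).Walk x y, ∀ q : (T j).Walk x y, p.IsPath → q.IsPath →
      (∀ e ∈ p.edges, e ∉ q.edges) ∧
      (∀ v ∈ p.support, v ∈ q.support → v = x ∨ v = y)

/-- The `n`-dimensional hypercube: vertices are functions `Fin n → ZMod 2`, adjacent iff
they differ in exactly one coordinate. -/
def hypercube (n : ℕ) : SimpleGraph (Fin n → ZMod 2) where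
  Adj x y := hammingDist x y = 1
  symm := ⟨fun x y (h : hammingDist x y = 1) => by show hammingDist y x = 1; rwa [hammingDist_comm]⟩
  loopless := ⟨fun x (h : hammingDist x x = 1) => by simp [hammingDist_self] at h⟩

/-- `G` is `k`-connected: it has more than `k` vertices and remains connected after
removing any set of fewer than `k` vertices. -/
def KConnected {V : Type*} (G : SimpleGraph V) (k : ℕ) : Prop :=
  k < Nat.card V ∧
  ∀ s : Finset V, s.card < k → ((G.induce ((↑s : Set V)ᶜ))).Connected

/-- `G` is `k`-regular: every vertex has exactly `k` neighbours. -/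
def IsKRegular {V : Type*} (G : SimpleGraph V) (k : ℕ) : Prop :=
  ∀ v : V, (G.neighborSet v).ncard = k

/-!
Write `k = n / 2` and `m = 2 ^ (n - 1)`. Edge-disjointness of the trees bounds the sum of their
degrees at a vertex by the degree `2k` in `Q_n`, and a vertex is inner (degree `≥ 2`) in at most
one tree: if `w` were inner in `T i` and `T j`, both `T i - w` and `T j - w` would be
disconnected, yet independence joins every pair of vertices other than `w` in one of them, and
two equivalence relations covering all pairs cannot both be proper. So each tree degree lies in
`[1, k + 1]`. Every edge of `T i` crosses the parity bipartition of `Q_n`, whose sides have `m`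
vertices, so the degrees of `T i` on the even side add up to `2m - 1`; hence `T i` has `c i`
inner vertices there with `m - 1 ≤ k * c i`, while `∑ i, c i ≤ m` by disjointness. Unless
`k ∣ m - 1`, this forces `k * c i = m`, so `k ∣ m`.
-/

open Finset

theorem dvd_or_dvd_succ_of_le_mul {k m : ℕ} (hk : 0 < k) (c : Fin k → ℕ)
    (hc : ∀ i, m ≤ k * c i) (hsum : ∑ i, c i ≤ m + 1) : k ∣ m ∨ k ∣ m + 1 := by
  by_cases hm : k ∣ m
  · exact .inl hm
  have hsucc : ∀ i ∈ univ, m + 1 ≤ k * c i := fun i _ ↦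
    (hc i).lt_of_ne (fun h ↦ hm ⟨c i, h⟩)
  have hle : ∑ i, k * c i ≤ ∑ _i : Fin k, (m + 1) := by
    rw [← mul_sum, sum_const, card_univ, Fintype.card_fin, smul_eq_mul]
    exact Nat.mul_le_mul_left k hsum
  have heq := (sum_eq_sum_iff_of_le hsucc).1 (le_antisymm (sum_le_sum hsucc) hle)
  exact .inr ⟨c ⟨0, hk⟩, heq _ (mem_univ _)⟩

theorem le_mul_card_filter_one_lt {V : Type*} (f : V → ℕ) (X : Finset V) {b m : ℕ}
    (hpos : ∀ v ∈ X, 0 < f v) (hle : ∀ v ∈ X, f v ≤ b + 1) (hsum : ∑ v ∈ X, f v = #X + m) :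
    m ≤ b * #{v ∈ X | 1 < f v} := by
  calc m = ∑ v ∈ X, (f v - 1) := by
        rw [sum_tsub_distrib _ hpos, hsum, sum_const, smul_eq_mul, mul_one,
          Nat.add_sub_cancel_left]
    _ ≤ ∑ v ∈ X, b * if 1 < f v then 1 else 0 := by
      refine sum_le_sum fun v hv ↦ ?_
      have := hle v hv
      split_ifs <;> omega
    _ = b * #{v ∈ X | 1 < f v} := by rw [← mul_sum, card_filter]

/-- `d i v` stands for the degree of `v` in the `i`-th of `k` independent spanning trees of a
`2k`-regular graph, and `X` for one side of a bipartition into two sides of `m + 1` vertices. -/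
theorem dvd_or_dvd_succ_of_degree_sums {V : Type*} [DecidableEq V] {k m : ℕ} (hk : 0 < k)
    (d : Fin k → V → ℕ) (X : Finset V) (hX : #X = m + 1)
    (hpos : ∀ i, ∀ v ∈ X, 0 < d i v) (hsum : ∀ v ∈ X, ∑ i, d i v ≤ 2 * k)
    (hside : ∀ i, ∑ v ∈ X, d i v = 2 * m + 1)
    (hinner : ∀ v ∈ X, ∀ i j, 1 < d i v → 1 < d j v → i = j) : k ∣ m ∨ k ∣ m + 1 := by
  have hle : ∀ i, ∀ v ∈ X, d i v ≤ k + 1 := by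
    intro i v hv
    have hrest : #(univ.erase i) • 1 ≤ ∑ j ∈ univ.erase i, d j v :=
      card_nsmul_le_sum _ _ _ fun j _ ↦ hpos j v hv
    rw [card_erase_of_mem (mem_univ i), card_univ, Fintype.card_fin, smul_eq_mul, mul_one]
      at hrest
    have := add_sum_erase univ (d · v) (mem_univ i)
    have := hsum v hv
    omega
  refine dvd_or_dvd_succ_of_le_mul hk (fun i ↦ #{v ∈ X | 1 < d i v})
    (fun i ↦ le_mul_card_filter_one_lt (d i) X (hpos i) (hle i) (by rw [hside, hX]; ring)) ?_
  calc ∑ i, #{v ∈ X | 1 < d i v} = #(univ.biUnion fun i ↦ {v ∈ X | 1 < d i v}) :=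
        (card_biUnion fun i _ j _ hij ↦
          disjoint_filter.2 fun v hv hi hj ↦ hij (hinner v hv i j hi hj)).symm
    _ ≤ #X := card_le_card (biUnion_subset.2 fun i _ ↦ filter_subset _ _)
    _ = m + 1 := hX

theorem Equivalence.forall_or_forall_of_forall_or {α : Sort*} {r s : α → α → Prop}
    (hr : Equivalence r) (hs : Equivalence s) (h : ∀ x y, r x y ∨ s x y) :
    (∀ x y, r x y) ∨ ∀ x y, s x y := by
  refine or_iff_not_imp_left.2 fun hr' ↦ ?_
  obtain ⟨a, b, hab⟩ : ∃ a b, ¬ r a b := by simpa using hr'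
  have hsab : s a b := (h a b).resolve_left hab
  have hsa : ∀ x, s x a := fun x ↦ by
    rcases h x a with hxa | hxa
    · exact hs.trans ((h x b).resolve_left fun hxb ↦ hab (hr.trans (hr.symm hxa) hxb))
        (hs.symm hsab)
    · exact hxa
  exact fun x y ↦ hs.trans (hsa x) (hs.symm (hsa y))

namespace SimpleGraph

variable {V : Type*} {G : SimpleGraph V}

theorem IsBipartiteWith.anti {H : SimpleGraph V} {s t : Set V} (hle : H ≤ G)
    (h : G.IsBipartiteWith s t) : H.IsBipartiteWith s t :=
  ⟨h.disjoint, fun _ _ hadj ↦ h.mem_of_adj (hle hadj)⟩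

theorem IsBipartiteWith.two_mul_card_eq [Fintype V] [DecidableEq V] [DecidableRel G.Adj]
    {s : Finset V} {d : ℕ} (hd : 0 < d) (hreg : G.IsRegularOfDegree d)
    (h : G.IsBipartiteWith ↑s ↑sᶜ) : 2 * #s = Fintype.card V := by
  have hsum := isBipartiteWith_sum_degrees_eq h
  simp only [hreg.degree_eq, sum_const, smul_eq_mul] at hsum
  rw [two_mul, ← card_add_card_compl s, Nat.eq_of_mul_eq_mul_right hd hsum]

theorem IsTree.sum_degree_eq_card_sub_one [Fintype V] [DecidableRel G.Adj] {s t : Finset V}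
    (hG : G.IsTree) (h : G.IsBipartiteWith ↑s ↑t) : ∑ v ∈ s, G.degree v = Fintype.card V - 1 := by
  rw [isBipartiteWith_sum_degrees_eq_card_edges h, ← hG.card_edgeFinset, Nat.add_sub_cancel]

theorem IsTree.not_preconnected_induce_compl_singleton (hG : G.IsTree) {w : V}
    [Fintype (G.neighborSet w)] (hw : 1 < G.degree w) : ¬ (G.induce {w}ᶜ).Preconnected := by
  intro hconn
  rw [← card_neighborFinset_eq_degree] at hw
  obtain ⟨a, ha, b, hb, hab⟩ := one_lt_card.1 hw
  rw [mem_neighborFinset] at ha hb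
  obtain ⟨p, hp⟩ := (hconn ⟨a, ha.ne'⟩ ⟨b, hb.ne'⟩).exists_isPath
  have hq : (p.map (Embedding.induce _).toHom).IsPath := hp.map Subtype.val_injective
  have hwq : w ∉ (p.map (Embedding.induce _).toHom).support := by
    rw [Walk.support_map, List.mem_map]
    rintro ⟨x, -, hx⟩
    exact x.2 hx
  have := hG.isAcyclic.mem_support_of_ne_mem_support_of_adj_of_isPath (Path.singleton ha.symm).2
    hq hb hwq
  simp [hab.symm, hb.ne'] at this

end SimpleGraph

namespace AreCISTs

variable {V : Type*} {k : ℕ} {G : SimpleGraph V} {T : Fin k → SimpleGraph V}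

theorem isTree (hT : AreCISTs G T) (i : Fin k) : (T i).IsTree := (hT.1 i).2

theorem le (hT : AreCISTs G T) (i : Fin k) : T i ≤ G := (hT.1 i).1

theorem not_adj_of_adj (hT : AreCISTs G T) {i j : Fin k} (hij : i ≠ j) {u v : V}
    (hi : (T i).Adj u v) : ¬ (T j).Adj u v := fun hj ↦
  (hT.2 u v hi.ne i j hij hi.toWalk hj.toWalk (by simp [hi.ne]) (by simp [hi.ne])).1
    s(u, v) (by simp) (by simp)

theorem sum_degree_le [Fintype V] [DecidableEq V] [DecidableRel G.Adj]
    [∀ i, DecidableRel (T i).Adj] (hT : AreCISTs G T) (v : V) :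
    ∑ i, (T i).degree v ≤ G.degree v := by
  simp_rw [← card_neighborFinset_eq_degree]
  rw [← card_biUnion fun i _ j _ hij ↦ disjoint_left.2 fun u hi hj ↦
    hT.not_adj_of_adj hij ((mem_neighborFinset _ _ _).1 hi) ((mem_neighborFinset _ _ _).1 hj)]
  refine card_le_card (biUnion_subset.2 fun i _ u hu ↦ ?_)
  rw [mem_neighborFinset] at hu ⊢
  exact hT.le i hu

theorem reachable_or_reachable_induce_compl_singleton (hT : AreCISTs G T) {i j : Fin k}
    (hij : i ≠ j) (w : V) (x y : ({w}ᶜ : Set V)) :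
    ((T i).induce {w}ᶜ).Reachable x y ∨ ((T j).induce {w}ᶜ).Reachable x y := by
  obtain ⟨x, hx⟩ := x
  obtain ⟨y, hy⟩ := y
  by_cases hxy : x = y
  · subst hxy
    exact .inl (Reachable.refl _)
  obtain ⟨p, hp⟩ := (hT.isTree i).connected.exists_isPath x y
  obtain ⟨q, hq⟩ := (hT.isTree j).connected.exists_isPath x y
  have hw : w ∉ p.support ∨ w ∉ q.support := by
    by_contra! h
    rcases (hT.2 x y hxy i j hij p q hp hq).2 w h.1 h.2 with rfl | rfl
    exacts [hx rfl, hy rfl]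
  rcases hw with hw | hw
  · exact .inl ⟨p.induce {w}ᶜ fun v hv hvw ↦ hw (hvw ▸ hv)⟩
  · exact .inr ⟨q.induce {w}ᶜ fun v hv hvw ↦ hw (hvw ▸ hv)⟩

theorem eq_of_one_lt_degree (hT : AreCISTs G T) {w : V} {i j : Fin k}
    [Fintype ((T i).neighborSet w)] [Fintype ((T j).neighborSet w)]
    (hi : 1 < (T i).degree w) (hj : 1 < (T j).degree w) : i = j := by
  by_contra hij
  rcases (reachable_is_equivalence _).forall_or_forall_of_forall_or (reachable_is_equivalence _)
    (hT.reachable_or_reachable_induce_compl_singleton hij w) with h | h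
  · exact (hT.isTree i).not_preconnected_induce_compl_singleton hi h
  · exact (hT.isTree j).not_preconnected_induce_compl_singleton hj h

theorem dvd_or_dvd_of_isBipartiteWith [Fintype V] [DecidableEq V] [Nontrivial V]
    [DecidableRel G.Adj] [∀ i, DecidableRel (T i).Adj] {s : Finset V} (hT : AreCISTs G T)
    (hk : 0 < k) (hreg : G.IsRegularOfDegree (2 * k)) (hG : G.IsBipartiteWith ↑s ↑sᶜ) :
    k ∣ #s - 1 ∨ k ∣ #s := by
  have hcard := hG.two_mul_card_eq (by omega) hreg
  obtain ⟨m, hm⟩ : ∃ m, #s = m + 1 :=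
    Nat.exists_eq_add_one.2 (by have := Fintype.one_lt_card (α := V); omega)
  rw [hm, Nat.add_sub_cancel]
  refine dvd_or_dvd_succ_of_degree_sums hk (fun i v ↦ (T i).degree v) s hm
    (fun i v _ ↦ (hT.isTree i).connected.preconnected.degree_pos_of_nontrivial v)
    (fun v _ ↦ hreg.degree_eq v ▸ hT.sum_degree_le v) (fun i ↦ ?_)
    (fun v _ i j ↦ hT.eq_of_one_lt_degree)
  rw [(hT.isTree i).sum_degree_eq_card_sub_one (hG.anti (hT.le i))]
  omega

end AreCISTs

section Hypercube

variable {n : ℕ}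

theorem hypercube_adj_iff {x y : Fin n → ZMod 2} :
    (hypercube n).Adj x y ↔ ∃ i, y = x + Pi.single i 1 := by
  change hammingDist x y = 1 ↔ _
  rw [hammingDist_eq_hammingNorm, hammingNorm, card_eq_one]
  refine exists_congr fun i ↦ ?_
  rw [← neg_add_eq_iff_eq_add, Finset.ext_iff, funext_iff]
  refine forall_congr' fun j ↦ ?_
  rcases eq_or_ne j i with rfl | hj
  · have : ∀ a : ZMod 2, a ≠ 0 ↔ a = 1 := by decide
    simp [this]
  · simp [hj]

theorem hypercube_isRegularOfDegree [DecidableRel (hypercube n).Adj] :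
    (hypercube n).IsRegularOfDegree n := by
  intro v
  have hnbr : (hypercube n).neighborFinset v = univ.image fun i ↦ v + Pi.single i 1 := by
    ext u
    simp [hypercube_adj_iff, eq_comm]
  rw [← card_neighborFinset_eq_degree, hnbr, card_image_of_injective, card_univ,
    Fintype.card_fin]
  intro i j hij
  by_contra hne
  simpa [Pi.single_apply, hne] using congrFun hij i

theorem hypercube_isBipartiteWith :
    (hypercube n).IsBipartiteWith ↑({v | ∑ i, v i = 0} : Finset (Fin n → ZMod 2))
      ↑({v | ∑ i, v i = 0} : Finset (Fin n → ZMod 2))ᶜ := by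
  refine ⟨disjoint_coe.2 disjoint_compl_right, fun x y hxy ↦ ?_⟩
  obtain ⟨i, rfl⟩ := hypercube_adj_iff.1 hxy
  have : ∀ a : ZMod 2, a = 0 ∧ ¬ a + 1 = 0 ∨ ¬ a = 0 ∧ a + 1 = 0 := by decide
  simpa [sum_add_distrib] using this (∑ j, x j)

end Hypercube

/-- Let `n > 2` be even with `n/2 ∤ 2^(n-1)` and `n/2 ∤ 2^(n-1) - 1`. Then the hypercube
`Q n` does not admit `n/2` completely independent spanning trees. -/
theorem hypercube_even_no_half_cists (n : ℕ) (hn : 2 < n) (heven : Even n)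
    (h1 : ¬ (n / 2 ∣ 2 ^ (n - 1))) (h2 : ¬ (n / 2 ∣ 2 ^ (n - 1) - 1)) :
    ¬ ∃ T : Fin (n / 2) → SimpleGraph (Fin n → ZMod 2), AreCISTs (hypercube n) T := by
  classical
  rintro ⟨T, hT⟩
  have hreg : (hypercube n).IsRegularOfDegree (2 * (n / 2)) := by
    rw [Nat.two_mul_div_two_of_even heven]
    exact hypercube_isRegularOfDegree
  have hcard :=
    hypercube_isBipartiteWith.two_mul_card_eq (by omega : 0 < n) hypercube_isRegularOfDegree
  have hX : #({v | ∑ i, v i = 0} : Finset (Fin n → ZMod 2)) = 2 ^ (n - 1) := by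
    rw [Fintype.card_fun, ZMod.card, Fintype.card_fin,
      ← Nat.two_pow_pred_mul_two (by omega)] at hcard
    omega
  -- makes `Fin n → ZMod 2` nontrivial
  have : NeZero n := ⟨by omega⟩
  rcases hT.dvd_or_dvd_of_isBipartiteWith (by omega) hreg hypercube_isBipartiteWith with h | h <;>
    rw [hX] at h
  exacts [h2 h, h1 h]
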